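/- arXiv:2409.05671 — 2 statements merged into one kernel-verified Lean document; each statement's English description precedes it below -/
import Mathlib

section
/- Let x, y, s ∈ 𝕂² and let 0 < α < π. Then the hyperbolic cosine rule cosh(d(x,y)) = cosh(d(x,s))·cosh(d(y,s)) − sinh(d(x,s))·sinh(d(y,s))·cos(α) holds if and only if φ_{x,y,α}(s) = 0. (This is the characterization of the isoptic curve C_α(x,y) in the Klein–Beltrami model: the locus of points s at which the segments to x and to y subtend the angle α.) -/
/-- Lorentzian inner product in homogeneous coordinates: `⟨u,v⟩ = u⋅v − 1`. -/
noncomputable def lorentz (u v : EuclideanSpace ℝ (Fin 2)) : ℝ :=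
  (inner ℝ u v : ℝ) - 1

/-- Inverse hyperbolic cosine: `arcosh t = log (t + √(t² − 1))`. -/
noncomputable def arcosh (t : ℝ) : ℝ := Real.log (t + Real.sqrt (t ^ 2 - 1))

/-- The hyperbolic distance on the Klein–Beltrami disk. -/
noncomputable def kleinDist (x y : EuclideanSpace ℝ (Fin 2)) : ℝ :=
  arcosh (-(lorentz x y) / Real.sqrt (lorentz x x * lorentz y y))

/-- The isoptic-curve expression `φ_{x,y,α}(s)` in the Klein–Beltrami model. -/
noncomputable def phiKB (x y : EuclideanSpace ℝ (Fin 2)) (α : ℝ)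
    (s : EuclideanSpace ℝ (Fin 2)) : ℝ :=
  lorentz x s * lorentz y s - lorentz x y * lorentz s s -
    Real.cos α * Real.sqrt ((lorentz x s ^ 2 - lorentz x x * lorentz s s) *
      (lorentz y s ^ 2 - lorentz y y * lorentz s s))

/-! Reverse Cauchy–Schwarz puts every argument of `arcosh` in `[1, ∞)`, so `cosh d` and `sinh d`
are explicit quotients of Lorentzian products. The two terms of the cosine rule at `s` then share
the denominator `√(⟨x,x⟩⟨s,s⟩) √(⟨y,y⟩⟨s,s⟩) = √(⟨x,x⟩⟨y,y⟩) · (−⟨s,s⟩)`, and clearing it turns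
the rule into `φ_{x,y,α}(s) = 0`. -/

open Real

lemma lorentz_neg {x y : EuclideanSpace ℝ (Fin 2)} (hx : ‖x‖ < 1) (hy : ‖y‖ < 1) :
    lorentz x y < 0 := by
  have hxy : ‖x‖ * ‖y‖ < 1 := by nlinarith [norm_nonneg x, norm_nonneg y]
  have hinner := real_inner_le_norm x y
  rw [lorentz]
  linarith

lemma lorentz_mul_self_le_sq {x : EuclideanSpace ℝ (Fin 2)} (hx : ‖x‖ ≤ 1)
    (y : EuclideanSpace ℝ (Fin 2)) : lorentz x x * lorentz y y ≤ lorentz x y ^ 2 := by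
  have hxy : ‖x - y‖ ^ 2 = ‖x‖ ^ 2 - 2 * inner ℝ x y + ‖y‖ ^ 2 := norm_sub_sq_real x y
  have hx2 : ‖x‖ ^ 2 ≤ 1 := pow_le_one₀ (norm_nonneg x) hx
  simp only [lorentz, real_inner_self_eq_norm_sq]
  nlinarith [sq_nonneg (inner ℝ x y - ‖x‖ ^ 2),
    mul_nonneg (sub_nonneg.mpr hx2) (sq_nonneg ‖x - y‖)]

section arcosh

variable {p q : ℝ}

lemma one_le_neg_div_sqrt (hp : p < 0) (hq : 0 < q) (hqp : q ≤ p ^ 2) : 1 ≤ -p / √q := by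
  rw [le_div_iff₀ (sqrt_pos.mpr hq), one_mul, ← abs_of_neg hp, ← sqrt_sq_eq_abs]
  exact sqrt_le_sqrt hqp

lemma sinh_arcosh_neg_div_sqrt (hp : p < 0) (hq : 0 < q) (hqp : q ≤ p ^ 2) :
    sinh (Real.arcosh (-p / √q)) = √(p ^ 2 - q) / √q := by
  have hsq : (-p / √q) ^ 2 - 1 = (p ^ 2 - q) / q := by
    rw [div_pow, sq_sqrt hq.le, neg_sq]
    field_simp
  rw [sinh_arcosh (one_le_neg_div_sqrt hp hq hqp), hsq, sqrt_div' _ hq.le]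

end arcosh

section kleinDist

variable {x y : EuclideanSpace ℝ (Fin 2)}

-- `kleinDist` unfolds definitionally to Mathlib's `Real.arcosh`.
lemma cosh_kleinDist (hx : ‖x‖ < 1) (hy : ‖y‖ < 1) :
    cosh (kleinDist x y) = -lorentz x y / √(lorentz x x * lorentz y y) :=
  cosh_arcosh <| one_le_neg_div_sqrt (lorentz_neg hx hy)
    (mul_pos_of_neg_of_neg (lorentz_neg hx hx) (lorentz_neg hy hy))
    (lorentz_mul_self_le_sq hx.le y)

lemma sinh_kleinDist (hx : ‖x‖ < 1) (hy : ‖y‖ < 1) :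
    sinh (kleinDist x y) =
      √(lorentz x y ^ 2 - lorentz x x * lorentz y y) / √(lorentz x x * lorentz y y) :=
  sinh_arcosh_neg_div_sqrt (lorentz_neg hx hy)
    (mul_pos_of_neg_of_neg (lorentz_neg hx hx) (lorentz_neg hy hy))
    (lorentz_mul_self_le_sq hx.le y)

end kleinDist

lemma cosineRule_sub_cosh_kleinDist_eq (x y s : EuclideanSpace ℝ (Fin 2))
    (hx : ‖x‖ < 1) (hy : ‖y‖ < 1) (hs : ‖s‖ < 1) (α : ℝ) :
    cosh (kleinDist x s) * cosh (kleinDist y s)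
        - sinh (kleinDist x s) * sinh (kleinDist y s) * cos α - cosh (kleinDist x y)
      = phiKB x y α s / (√(lorentz x x * lorentz y y) * -lorentz s s) := by
  have hA := lorentz_neg hx hx
  have hB := lorentz_neg hy hy
  have hC := lorentz_neg hs hs
  have hAB := mul_pos_of_neg_of_neg hA hB
  have hsqrt : √(lorentz x x * lorentz s s) * √(lorentz y y * lorentz s s)
      = √(lorentz x x * lorentz y y) * -lorentz s s := by
    rw [← sqrt_mul (mul_pos_of_neg_of_neg hA hC).le, ← abs_of_neg hC, ← sqrt_sq_eq_abs,
      ← sqrt_mul hAB.le]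
    ring_nf
  rw [cosh_kleinDist hx hs, cosh_kleinDist hy hs, sinh_kleinDist hx hs, sinh_kleinDist hy hs,
    cosh_kleinDist hx hy, phiKB, sqrt_mul' _ (sub_nonneg.mpr (lorentz_mul_self_le_sq hy.le s)),
    div_mul_div_comm, div_mul_div_comm, hsqrt]
  have hAB_ne := (sqrt_pos.mpr hAB).ne'
  have hC_ne := hC.ne
  field_simp
  ring

theorem isoptic_curve_klein_general (x y s : EuclideanSpace ℝ (Fin 2))
    (hx : ‖x‖ < 1) (hy : ‖y‖ < 1) (hs : ‖s‖ < 1)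
    (α : ℝ) :
    (Real.cosh (kleinDist x y)
        = Real.cosh (kleinDist x s) * Real.cosh (kleinDist y s)
          - Real.sinh (kleinDist x s) * Real.sinh (kleinDist y s) * Real.cos α)
      ↔ phiKB x y α s = 0 := by
  have hscale : √(lorentz x x * lorentz y y) * -lorentz s s ≠ 0 :=
    (mul_pos (sqrt_pos.mpr (mul_pos_of_neg_of_neg (lorentz_neg hx hx) (lorentz_neg hy hy)))
      (neg_pos.mpr (lorentz_neg hs hs))).ne'
  rw [eq_comm, ← sub_eq_zero, cosineRule_sub_cosh_kleinDist_eq x y s hx hy hs α, div_eq_zero_iff,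
    or_iff_left hscale]

/-- Characterization of the isoptic curve `C_α(x,y)` in the Klein–Beltrami model:
the hyperbolic cosine rule at `s` with angle `α` holds iff `φ_{x,y,α}(s) = 0`. -/
theorem isoptic_curve_klein (x y s : EuclideanSpace ℝ (Fin 2))
    (hx : ‖x‖ < 1) (hy : ‖y‖ < 1) (hs : ‖s‖ < 1)
    (α : ℝ) (hα₀ : 0 < α) (hαπ : α < Real.pi) :
    (Real.cosh (kleinDist x y)
        = Real.cosh (kleinDist x s) * Real.cosh (kleinDist y s)
          - Real.sinh (kleinDist x s) * Real.sinh (kleinDist y s) * Real.cos α)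
      ↔ phiKB x y α s = 0 :=
  isoptic_curve_klein_general x y s hx hy hs α
end

section
/- Let x, y ∈ 𝕂² and let 0 < α < π. For every s ∈ 𝕂², ψ_{x,y,α}(s) = 0 if and only if φ_{x,y,α}(s) = 0 or φ_{x,y,π−α}(s) = 0. (The zero locus of the quartic polynomial ψ_{x,y,α} in the Klein–Beltrami model is exactly the union of isoptic curves C_α(x,y) ∪ C_{π−α}(x,y).) -/
/-- The quartic polynomial expression `ψ_{x,y,α}(s)` in the Klein–Beltrami model. -/
noncomputable def psiKB (x y : EuclideanSpace ℝ (Fin 2)) (α : ℝ)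
    (s : EuclideanSpace ℝ (Fin 2)) : ℝ :=
  lorentz x s ^ 2 * lorentz y s ^ 2 + lorentz x y ^ 2 * lorentz s s ^ 2
    - 2 * lorentz x s * lorentz y s * lorentz x y * lorentz s s
    - Real.cos α ^ 2 * lorentz x s ^ 2 * lorentz y s ^ 2
    - Real.cos α ^ 2 * lorentz x x * lorentz y y * lorentz s s ^ 2
    + Real.cos α ^ 2 * lorentz y s ^ 2 * lorentz x x * lorentz s s
    + Real.cos α ^ 2 * lorentz x s ^ 2 * lorentz y y * lorentz s s

/-!
Writing `A := ⟨x,s⟩⟨y,s⟩ − ⟨x,y⟩⟨s,s⟩` and `P := (⟨x,s⟩² − ⟨x,x⟩⟨s,s⟩)(⟨y,s⟩² − ⟨y,y⟩⟨s,s⟩)`,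
the quartic is `ψ_α = A² − cos²α · P`, while `φ_α = A − cos α · √P` and, since
`cos (π − α) = − cos α`, `φ_{π−α} = A + cos α · √P`. Inside the disk both factors of `P` are
nonnegative by the reverse (Aczél) Cauchy–Schwarz inequality, so `(√P)² = P` and
`ψ_α = φ_α · φ_{π−α}`.
-/

open RealInnerProductSpace

theorem one_sub_norm_sq_mul_le_sq_one_sub_inner {E : Type*} [NormedAddCommGroup E]
    [InnerProductSpace ℝ E] (u v : E) (huv : ‖u‖ * ‖v‖ ≤ 1) :
    (1 - ‖u‖ ^ 2) * (1 - ‖v‖ ^ 2) ≤ (1 - ⟪u, v⟫) ^ 2 := by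
  have hcs : ⟪u, v⟫ ≤ ‖u‖ * ‖v‖ := real_inner_le_norm u v
  calc (1 - ‖u‖ ^ 2) * (1 - ‖v‖ ^ 2) = (1 - ‖u‖ * ‖v‖) ^ 2 - (‖u‖ - ‖v‖) ^ 2 := by ring
    _ ≤ (1 - ‖u‖ * ‖v‖) ^ 2 := sub_le_self _ (sq_nonneg _)
    _ ≤ (1 - ⟪u, v⟫) ^ 2 := pow_le_pow_left₀ (by linarith) (by linarith) 2

theorem lorentz_sq_sub_lorentz_self_mul_nonneg {u v : EuclideanSpace ℝ (Fin 2)}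
    (hu : ‖u‖ < 1) (hv : ‖v‖ < 1) :
    0 ≤ lorentz u v ^ 2 - lorentz u u * lorentz v v := by
  have huv : ‖u‖ * ‖v‖ ≤ 1 := by nlinarith [norm_nonneg u, norm_nonneg v]
  have hAczel := one_sub_norm_sq_mul_le_sq_one_sub_inner u v huv
  simp only [lorentz, real_inner_self_eq_norm_sq]
  linear_combination hAczel

theorem psiKB_eq_sq_sub_cos_sq_mul (x y : EuclideanSpace ℝ (Fin 2)) (α : ℝ)
    (s : EuclideanSpace ℝ (Fin 2)) :
    psiKB x y α s = (lorentz x s * lorentz y s - lorentz x y * lorentz s s) ^ 2 -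
      Real.cos α ^ 2 * ((lorentz x s ^ 2 - lorentz x x * lorentz s s) *
        (lorentz y s ^ 2 - lorentz y y * lorentz s s)) := by
  unfold psiKB
  ring

theorem psiKB_eq_phiKB_mul_phiKB_pi_sub {x y s : EuclideanSpace ℝ (Fin 2)}
    (hx : ‖x‖ < 1) (hy : ‖y‖ < 1) (hs : ‖s‖ < 1) (α : ℝ) :
    psiKB x y α s = phiKB x y α s * phiKB x y (Real.pi - α) s := by
  have hP := mul_nonneg (lorentz_sq_sub_lorentz_self_mul_nonneg hx hs)
    (lorentz_sq_sub_lorentz_self_mul_nonneg hy hs)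
  rw [psiKB_eq_sq_sub_cos_sq_mul, phiKB, phiKB, Real.cos_pi_sub]
  linear_combination Real.cos α ^ 2 * Real.sq_sqrt hP

theorem psi_zero_iff_general (x y : EuclideanSpace ℝ (Fin 2))
    (hx : ‖x‖ < 1) (hy : ‖y‖ < 1)
    (α : ℝ) :
    ∀ s : EuclideanSpace ℝ (Fin 2), ‖s‖ < 1 →
      (psiKB x y α s = 0 ↔ phiKB x y α s = 0 ∨ phiKB x y (Real.pi - α) s = 0) := by
  intro s hs
  rw [psiKB_eq_phiKB_mul_phiKB_pi_sub hx hy hs, mul_eq_zero]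

/-- The zero locus of `ψ_{x,y,α}` inside the Klein–Beltrami disk is exactly
the union of isoptic curves `C_α(x,y) ∪ C_{π−α}(x,y)`. -/
theorem psi_zero_iff (x y : EuclideanSpace ℝ (Fin 2))
    (hx : ‖x‖ < 1) (hy : ‖y‖ < 1)
    (α : ℝ) (hα₀ : 0 < α) (hαπ : α < Real.pi) :
    ∀ s : EuclideanSpace ℝ (Fin 2), ‖s‖ < 1 →
      (psiKB x y α s = 0 ↔ phiKB x y α s = 0 ∨ phiKB x y (Real.pi - α) s = 0) :=
  psi_zero_iff_general x y hx hy α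
end
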